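/- Let Z be a closed subspace of a complex Hilbert space H. Then the topological space G^Z := {P : P is an orthogonal projection on H and range(P) ∔ Z = H}, with the topology inherited from the operator norm on B(H), is contractible. -/

import Mathlib

/-!
An orthogonal projection `P` is complementary to `Z` exactly when `P - Q` is invertible,
`Q` being the orthogonal projection onto `Z`; in that case `F = P (P - Q)⁻¹` is the idempotent
with range `range P` and kernel `Z`. Conversely, the orthogonal projection onto the range of an
idempotent `F` is `F (F + F* - 1)⁻¹`, where `(F + F* - 1)² = 1 + (F - F*)* (F - F*) ≥ 1`.
Both formulas are continuous and inverse to each other, so `G^Z` is homeomorphic to the set of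
idempotents with kernel `Z`, which is an affine subspace of `B(H)`, hence contractible.
-/

/-- `P` is an orthogonal projection: idempotent and self-adjoint. -/
def IsOrthProjection {H : Type*} [NormedAddCommGroup H] [InnerProductSpace ℂ H]
    [CompleteSpace H] (P : H →L[ℂ] H) : Prop :=
  P ∘L P = P ∧ IsSelfAdjoint P

open scoped Ring
open ContinuousLinearMap

section Ring

variable {A : Type*} [Ring A]

/-- For an idempotent `q` in `Module.End R M`, this is the set of idempotents with kernel
`range q`. -/
def projectionsAlong (q : A) : Set A := {f | f * q = 0 ∧ q * (1 - f) = 1 - f}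

theorem one_sub_mem_projectionsAlong {q : A} (hq : IsIdempotentElem q) :
    1 - q ∈ projectionsAlong q := by
  constructor
  · rw [sub_mul, one_mul, hq.eq, sub_self]
  · rw [sub_sub_cancel, hq.eq]

theorem IsIdempotentElem.of_mem_projectionsAlong {f q : A} (hf : f ∈ projectionsAlong q) :
    IsIdempotentElem f := by
  have h : f * (1 - f) = 0 := by rw [← hf.2, ← mul_assoc, hf.1, zero_mul]
  rwa [mul_sub, mul_one, sub_eq_zero, eq_comm] at h

theorem convex_projectionsAlong [Module ℝ A] [IsScalarTower ℝ A A] [SMulCommClass ℝ A A]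
    (q : A) : Convex ℝ (projectionsAlong q) := by
  rintro f ⟨hfq, hqf⟩ g ⟨hgq, hqg⟩ a b - - hab
  have h1 : 1 - (a • f + b • g) = a • (1 - f) + b • (1 - g) := by
    rw [smul_sub, smul_sub, sub_add_sub_comm, ← add_smul, hab, one_smul]
  refine ⟨?_, ?_⟩
  · simp only [add_mul, smul_mul_assoc, hfq, hgq, smul_zero, add_zero]
  · rw [h1, mul_add, mul_smul_comm, mul_smul_comm, hqf, hqg]

theorem mul_ringInverse_sub_mem_projectionsAlong {p q : A} (hp : IsIdempotentElem p)
    (hq : IsIdempotentElem q) (hu : IsUnit (p - q)) :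
    p * (p - q)⁻¹ʳ ∈ projectionsAlong q ∧ p * (p - q)⁻¹ʳ * p = p := by
  obtain ⟨u, hu⟩ := hu
  rw [← hu, Ring.inverse_unit]
  -- `p u⁻¹ q = p u q (u²)⁻¹ = 0`, since `u² = (p - q)²` commutes with `q`
  have hcomm : Commute ((u * u : Aˣ) : A) q := by
    have hq' : ∀ x, x * q * q = x * q := fun x => by rw [mul_assoc, hq.eq]
    simp only [Units.val_mul, hu, Commute, SemiconjBy]
    simp only [mul_sub, sub_mul, ← mul_assoc, hp.eq, hq.eq, hq']
    abel
  have hinv : ((u⁻¹ : Aˣ) : A) = u * ((u * u)⁻¹ : Aˣ) := by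
    rw [mul_inv_rev, Units.val_mul, Units.mul_inv_cancel_left]
  have hpuq : p * u * q = 0 := by
    rw [hu, mul_sub, sub_mul, hp.eq, mul_assoc, hq.eq, sub_self]
  have hfq : p * ↑u⁻¹ * q = 0 := by
    rw [hinv, ← mul_assoc, mul_assoc, hcomm.units_inv_left.eq, ← mul_assoc, hpuq, zero_mul]
  have hfp : p * ↑u⁻¹ * p = p := by
    have : p * ↑u⁻¹ * (p - q) = p := by rw [← hu, Units.inv_mul_cancel_right]
    rwa [mul_sub, hfq, sub_zero] at this
  have hf : 1 - p * ↑u⁻¹ = -(q * ↑u⁻¹) := by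
    rw [← Units.mul_inv u, hu]
    noncomm_ring
  exact ⟨⟨hfq, by rw [hf, mul_neg, ← mul_assoc, hq.eq]⟩, hfp⟩

end Ring

section StarRing

variable {A : Type*} [Ring A] [StarRing A]

theorem isUnit_sub_of_mem_projectionsAlong {p q f : A} (hp : IsSelfAdjoint p)
    (hq : IsSelfAdjoint q) (hf : f ∈ projectionsAlong q) (hfp : f * p = p) (hpf : p * f = f) :
    IsUnit (p - q) := by
  obtain ⟨hfq, hqf⟩ := hf
  have hpf' : star f * p = star f := by simpa [hp.star_eq] using congrArg star hpf
  have hqf' : (1 - star f) * q = 1 - star f := by simpa [hq.star_eq] using congrArg star hqf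
  have hL : (star f * f - (1 - star f) * (1 - f)) * (p - q) = 1 := calc
    _ = star f * (f * p) - star f * (f * q)
        - (1 - star f) * (p - f * p) + (1 - star f) * (q - f * q) := by noncomm_ring
    _ = 1 := by
      simp only [hfp, hfq, hpf', sub_self, mul_zero, sub_zero]
      rw [hqf', add_sub_cancel]
  -- `p - q` is self-adjoint, so the adjoint of a left inverse is a right inverse
  have hR : (p - q) * star (star f * f - (1 - star f) * (1 - f)) = 1 := by
    simpa only [star_mul, (hp.sub hq).star_eq, star_one] using congrArg star hL
  exact isUnit_iff_exists.2 ⟨_, by rwa [left_inv_eq_right_inv hL hR], hL⟩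

theorem mul_ringInverse_sub_eq_of_mem_projectionsAlong {p q f : A} (hp : IsSelfAdjoint p)
    (hq : IsSelfAdjoint q) (hf : f ∈ projectionsAlong q) (hfp : f * p = p) (hpf : p * f = f) :
    p * (p - q)⁻¹ʳ = f := calc
  p * (p - q)⁻¹ʳ = f * (p - q) * (p - q)⁻¹ʳ := by rw [mul_sub, hfp, hf.1, sub_zero]
  _ = f := Ring.mul_inverse_cancel_right _ _ (isUnit_sub_of_mem_projectionsAlong hp hq hf hfp hpf)

theorem isStarProjection_mul_ringInverse {e : A} (he : IsIdempotentElem e)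
    (hd : IsUnit (e + star e - 1)) :
    IsStarProjection (e * (e + star e - 1)⁻¹ʳ) ∧ e * (e * (e + star e - 1)⁻¹ʳ) =
      e * (e + star e - 1)⁻¹ʳ ∧ e * (e + star e - 1)⁻¹ʳ * e = e := by
  have hinv : IsSelfAdjoint (e + star e - 1)⁻¹ʳ := by
    refine IsSelfAdjoint.ringInverse ?_
    simp [IsSelfAdjoint, add_comm]
  have hes := IsIdempotentElem.star_iff.2 he
  obtain ⟨d, hd⟩ := hd
  rw [← hd, Ring.inverse_unit] at hinv ⊢
  have h1 : SemiconjBy (d : A) (star e) e := by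
    rw [SemiconjBy, hd]
    simp only [mul_sub, sub_mul, mul_add, add_mul, he.eq, hes.eq, one_mul, mul_one]
    abel
  have h2 : SemiconjBy (d : A) e (star e) := by
    rw [SemiconjBy, hd]
    simp only [mul_sub, sub_mul, mul_add, add_mul, he.eq, hes.eq, one_mul, mul_one]
    abel
  have hed : e * d = e * star e := by
    rw [hd, mul_sub, mul_add, he.eq, mul_one]
    abel
  have hpe : e * ↑d⁻¹ * e = e := by
    rw [mul_assoc, h1.units_inv_symm_left.eq, ← mul_assoc, ← hed, Units.mul_inv_cancel_right]
  refine ⟨⟨?_, ?_⟩, by rw [← mul_assoc, he.eq], hpe⟩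
  · rw [IsIdempotentElem, ← mul_assoc, hpe]
  · rw [IsSelfAdjoint, star_mul, hinv.star_eq, h2.units_inv_symm_left.eq]

theorem mul_ringInverse_add_star_sub_one_eq {p f : A} (hp : IsSelfAdjoint p)
    (hfp : f * p = p) (hpf : p * f = f) (hd : IsUnit (f + star f - 1)) :
    f * (f + star f - 1)⁻¹ʳ = p := by
  have hpf' : p * star f = p := by simpa [hp.star_eq] using congrArg star hfp
  calc f * (f + star f - 1)⁻¹ʳ = p * (f + star f - 1) * (f + star f - 1)⁻¹ʳ := by
        rw [mul_sub, mul_add, hpf, hpf', mul_one, add_sub_cancel_right]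
    _ = p := Ring.mul_inverse_cancel_right _ _ hd

end StarRing

theorem Continuous.ringInverse {X R : Type*} [TopologicalSpace X] [NormedRing R]
    [HasSummableGeomSeries R] {f : X → R} (hf : Continuous f) (hu : ∀ x, IsUnit (f x)) :
    Continuous fun x => (f x)⁻¹ʳ :=
  continuous_iff_continuousAt.2 fun x => by
    obtain ⟨u, hu⟩ := hu x
    exact (hu ▸ NormedRing.inverse_continuousAt u).comp hf.continuousAt

section CStarAlgebra

variable {A : Type*} [CStarAlgebra A] [PartialOrder A] [StarOrderedRing A]

theorem isUnit_add_star_sub_one {e : A} (he : IsIdempotentElem e) :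
    IsUnit (e + star e - 1) := by
  have hsq : (e + star e - 1) * (e + star e - 1) = 1 + star (e - star e) * (e - star e) := by
    simp only [star_sub, star_star, mul_sub, sub_mul, mul_add, add_mul, mul_one, one_mul, he.eq,
      (IsIdempotentElem.star_iff.2 he).eq]
    abel
  have h : IsUnit ((e + star e - 1) * (e + star e - 1)) :=
    CStarAlgebra.isUnit_of_le 1 (hsq ▸ le_add_of_nonneg_right (star_mul_self_nonneg _))
  exact ((Commute.refl _).isUnit_mul_iff.1 h).1

/-- In `B(H)`, `IsUnit (p - q)` says that `range p ∔ range q = H`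
(see `isCompl_range_iff_isUnit_sub`). -/
def complementaryStarProjections (q : A) : Set A := {p | IsStarProjection p ∧ IsUnit (p - q)}

variable {q : A}

noncomputable def complementaryStarProjectionsHomeomorph (hq : IsStarProjection q) :
    complementaryStarProjections q ≃ₜ projectionsAlong q where
  toFun p := ⟨p.1 * (p.1 - q)⁻¹ʳ, (mul_ringInverse_sub_mem_projectionsAlong
    p.2.1.isIdempotentElem hq.isIdempotentElem p.2.2).1⟩
  invFun f := ⟨f.1 * (f.1 + star f.1 - 1)⁻¹ʳ, by
    have hf := IsIdempotentElem.of_mem_projectionsAlong f.2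
    obtain ⟨hp, hfp, hpf⟩ := isStarProjection_mul_ringInverse hf (isUnit_add_star_sub_one hf)
    exact ⟨hp, isUnit_sub_of_mem_projectionsAlong hp.isSelfAdjoint hq.isSelfAdjoint f.2
      hfp hpf⟩⟩
  left_inv p := by
    obtain ⟨hf, hfp⟩ :=
      mul_ringInverse_sub_mem_projectionsAlong p.2.1.isIdempotentElem hq.isIdempotentElem p.2.2
    refine Subtype.ext (mul_ringInverse_add_star_sub_one_eq p.2.1.isSelfAdjoint hfp ?_
      (isUnit_add_star_sub_one (IsIdempotentElem.of_mem_projectionsAlong hf)))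
    rw [← mul_assoc, p.2.1.isIdempotentElem.eq]
  right_inv f := by
    have hf := IsIdempotentElem.of_mem_projectionsAlong f.2
    obtain ⟨hp, hfp, hpf⟩ := isStarProjection_mul_ringInverse hf (isUnit_add_star_sub_one hf)
    exact Subtype.ext (mul_ringInverse_sub_eq_of_mem_projectionsAlong hp.isSelfAdjoint
      hq.isSelfAdjoint f.2 hfp hpf)
  continuous_toFun := by
    refine (continuous_subtype_val.mul (Continuous.ringInverse ?_ fun p => p.2.2)).subtype_mk _
    exact continuous_subtype_val.sub continuous_const
  continuous_invFun := by
    refine (continuous_subtype_val.mul (Continuous.ringInverse ?_ fun f =>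
      isUnit_add_star_sub_one (IsIdempotentElem.of_mem_projectionsAlong f.2))).subtype_mk _
    exact (continuous_subtype_val.add continuous_subtype_val.star).sub continuous_const

theorem contractibleSpace_complementaryStarProjections (hq : IsStarProjection q) :
    ContractibleSpace (complementaryStarProjections q) :=
  have := (convex_projectionsAlong q).contractibleSpace
    ⟨1 - q, one_sub_mem_projectionsAlong hq.isIdempotentElem⟩
  (complementaryStarProjectionsHomeomorph hq).contractibleSpace

end CStarAlgebra

theorem isCompl_range_of_mem_projectionsAlong {R M : Type*} [Ring R] [TopologicalSpace M]
    [AddCommGroup M] [Module R M] [IsTopologicalAddGroup M] {p q f : M →L[R] M}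
    (hf : f ∈ projectionsAlong q) (hfp : f * p = p) (hpf : p * f = f) :
    IsCompl p.range q.range := by
  have hff : IsIdempotentElem f := calc
    f * f = f * (p * f) := by rw [hpf]
    _ = f := by rw [← mul_assoc, hfp, hpf]
  have hrange : p.range = f.range := by
    apply le_antisymm
    · rintro _ ⟨x, rfl⟩
      exact ⟨p x, by simpa using congr($hfp x)⟩
    · rintro _ ⟨x, rfl⟩
      exact ⟨f x, by simpa using congr($hpf x)⟩
  have hker : q.range = f.ker := by
    apply le_antisymm
    · rintro _ ⟨x, rfl⟩
      simpa using congr($(hf.1) x)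
    · intro x (hx : f x = 0)
      exact ⟨x, by simpa [hx] using congr($(hf.2) x)⟩
  rw [hrange, hker]
  exact hff.isTopCompl.isCompl

theorem exists_mem_projectionsAlong_of_isCompl {𝕜 E : Type*} [NontriviallyNormedField 𝕜]
    [NormedAddCommGroup E] [NormedSpace 𝕜 E] [CompleteSpace E] {p q : E →L[𝕜] E}
    (hp : IsIdempotentElem p) (hq : IsIdempotentElem q) (h : IsCompl p.range q.range) :
    ∃ f ∈ projectionsAlong q, f * p = p ∧ p * f = f := by
  have ht := Submodule.IsCompl.isTopCompl_of_isClosed h hp.isClosed_range hq.isClosed_range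
  refine ⟨p.range.projectionL q.range ht, ⟨?_, ?_⟩, ?_, ?_⟩ <;> ext x
  · exact (Submodule.projectionL_apply_eq_zero_iff ht).2 ⟨x, rfl⟩
  · rw [mul_apply_eq_comp, sub_apply, one_apply_eq_self,
      ← Submodule.projectionL_eq_self_sub_projectionL ht x]
    exact (LinearMap.IsIdempotentElem.mem_range_iff hq.toLinearMap).1
      (Submodule.projectionL_apply_mem ht.symm x)
  · exact (Submodule.projectionL_eq_self_iff ht _).2 ⟨x, rfl⟩
  · exact (LinearMap.IsIdempotentElem.mem_range_iff hp.toLinearMap).1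
      (Submodule.projectionL_apply_mem ht x)

theorem isCompl_range_iff_isUnit_sub {𝕜 H : Type*} [RCLike 𝕜] [NormedAddCommGroup H]
    [InnerProductSpace 𝕜 H] [CompleteSpace H] {p q : H →L[𝕜] H} (hp : IsStarProjection p)
    (hq : IsStarProjection q) : IsCompl p.range q.range ↔ IsUnit (p - q) := by
  refine ⟨fun h => ?_, fun h => ?_⟩
  · obtain ⟨f, hf, hfp, hpf⟩ :=
      exists_mem_projectionsAlong_of_isCompl hp.isIdempotentElem hq.isIdempotentElem h
    exact isUnit_sub_of_mem_projectionsAlong hp.isSelfAdjoint hq.isSelfAdjoint hf hfp hpf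
  · obtain ⟨hf, hfp⟩ := mul_ringInverse_sub_mem_projectionsAlong hp.isIdempotentElem
      hq.isIdempotentElem h
    exact isCompl_range_of_mem_projectionsAlong hf hfp
      (by rw [← mul_assoc, hp.isIdempotentElem.eq])

theorem contractible_complementary_projections {H : Type*} [NormedAddCommGroup H]
    [InnerProductSpace ℂ H] [CompleteSpace H]
    (Z : Submodule ℂ H) (hZ : IsClosed (Z : Set H)) :
    ContractibleSpace {P : H →L[ℂ] H //
      IsOrthProjection P ∧ IsCompl (LinearMap.range (P : H →ₗ[ℂ] H)) Z} := by
  have := hZ.completeSpace_coe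
  have hQ : IsStarProjection Z.starProjection := isStarProjection_starProjection
  have h (P : H →L[ℂ] H) : IsOrthProjection P ∧ IsCompl (LinearMap.range (P : H →ₗ[ℂ] H)) Z ↔
      P ∈ complementaryStarProjections Z.starProjection := by
    have hO : IsOrthProjection P ↔ IsStarProjection P :=
      ⟨fun h => ⟨h.1, h.2⟩, fun h => ⟨h.1, h.2⟩⟩
    rw [hO]
    refine and_congr_right fun hP => ?_
    simpa only [Submodule.range_starProjection] using isCompl_range_iff_isUnit_sub hP hQ
  have := contractibleSpace_complementaryStarProjections hQ
  exact (Homeomorph.subtype (.refl _) h).contractibleSpace
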